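/- arXiv:1508.04904 — 3 statements merged into one kernel-verified Lean document; each statement's English description precedes it below -/
import Mathlib

section
/- The Hausdorff distance between two line segments s¹ = [p¹₁, p¹₂] and s² = [p²₁, p²₂] in ℝ² equals max{D_ps(p¹₁,s²), D_ps(p¹₂,s²), D_ps(p²₁,s¹), D_ps(p²₂,s¹)}, where D_ps denotes the point-to-segment distance. -/
noncomputable section

abbrev E2 := EuclideanSpace ℝ (Fin 2)

/-- Point-to-segment distance. -/
def Dps (p a b : E2) : ℝ := Metric.infDist p (segment ℝ a b)

lemma infDist_segment_le {t : Set E2} (ht : Convex ℝ t) (hne : t.Nonempty)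
    {a b x : E2} (hx : x ∈ segment ℝ a b) :
    Metric.infDist x t ≤ max (Metric.infDist a t) (Metric.infDist b t) := by
  obtain ⟨u, v, hu, hv, huv, rfl⟩ := hx
  refine le_of_forall_pos_le_add (fun ε hε => ?_)
  obtain ⟨y, hy, hay⟩ := (Metric.infDist_lt_iff hne).1
    (show Metric.infDist a t < Metric.infDist a t + ε by linarith)
  obtain ⟨z, hz, hbz⟩ := (Metric.infDist_lt_iff hne).1
    (show Metric.infDist b t < Metric.infDist b t + ε by linarith)
  have hw : u • y + v • z ∈ t := ht hy hz hu hv huv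
  have h1 : dist (u • a + v • b) (u • y + v • z) ≤ u * dist a y + v * dist b z := by
    rw [dist_eq_norm]
    have : u • a + v • b - (u • y + v • z) = u • (a - y) + v • (b - z) := by
      simp [smul_sub]; abel
    rw [this]
    calc ‖u • (a - y) + v • (b - z)‖ ≤ ‖u • (a - y)‖ + ‖v • (b - z)‖ := norm_add_le _ _
      _ = u * dist a y + v * dist b z := by
          rw [norm_smul, norm_smul, Real.norm_of_nonneg hu, Real.norm_of_nonneg hv,
            dist_eq_norm, dist_eq_norm]
  have hm := le_max_left (Metric.infDist a t) (Metric.infDist b t)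
  have hm' := le_max_right (Metric.infDist a t) (Metric.infDist b t)
  calc Metric.infDist (u • a + v • b) t ≤ dist (u • a + v • b) (u • y + v • z) :=
        Metric.infDist_le_dist_of_mem hw
    _ ≤ u * dist a y + v * dist b z := h1
    _ ≤ u * (max (Metric.infDist a t) (Metric.infDist b t) + ε)
        + v * (max (Metric.infDist a t) (Metric.infDist b t) + ε) := by
          gcongr <;> linarith
    _ = max (Metric.infDist a t) (Metric.infDist b t) + ε := by
          rw [← add_mul, huv, one_mul]

lemma bounded_seg (p q : E2) : Bornology.IsBounded (segment ℝ p q) := by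
  rw [segment_eq_image]
  exact (isCompact_Icc.image (by continuity)).isBounded

/-- The Hausdorff distance between two line segments equals the maximum of the four
point-to-segment distances from the endpoints of one segment to the other segment. -/
theorem stmt_6 (a b c d : E2) :
    Metric.hausdorffDist (segment ℝ a b) (segment ℝ c d) =
      max (max (Dps a c d) (Dps b c d)) (max (Dps c a b) (Dps d a b)) := by
  have hne1 : (segment ℝ a b).Nonempty := ⟨a, left_mem_segment ℝ a b⟩
  have hne2 : (segment ℝ c d).Nonempty := ⟨c, left_mem_segment ℝ c d⟩
  have hfin : EMetric.hausdorffEdist (segment ℝ a b) (segment ℝ c d) ≠ ⊤ :=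
    Metric.hausdorffEdist_ne_top_of_nonempty_of_bounded hne1 hne2
      (bounded_seg a b) (bounded_seg c d)
  refine le_antisymm ?_ ?_
  · apply Metric.hausdorffDist_le_of_infDist
    · exact le_trans Metric.infDist_nonneg (le_trans (le_max_left _ _) (le_max_left _ _))
    · intro x hx
      exact le_trans (infDist_segment_le (convex_segment c d) hne2 hx) (le_max_left _ _)
    · intro x hx
      exact le_trans (infDist_segment_le (convex_segment a b) hne1 hx) (le_max_right _ _)
  · refine max_le (max_le ?_ ?_) (max_le ?_ ?_)
    · exact Metric.infDist_le_hausdorffDist_of_mem (left_mem_segment ℝ a b) hfin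
    · exact Metric.infDist_le_hausdorffDist_of_mem (right_mem_segment ℝ a b) hfin
    · rw [Metric.hausdorffDist_comm]
      exact Metric.infDist_le_hausdorffDist_of_mem (left_mem_segment ℝ c d)
        (by rwa [EMetric.hausdorffEdist_comm])
    · rw [Metric.hausdorffDist_comm]
      exact Metric.infDist_le_hausdorffDist_of_mem (right_mem_segment ℝ c d)
        (by rwa [EMetric.hausdorffEdist_comm])
end
end

section
/- For any trajectories Tⁱ and Tʲ, the discrete Fréchet distance satisfies D_Fréchet(Tⁱ,Tʲ) ≤ D_dFréchet(Tⁱ,Tʲ) ≤ D_Fréchet(Tⁱ,Tʲ) + ε, where ε = max of the maximum edge lengths max_k ‖pⁱ_k pⁱ_{k+1}‖ and max_l ‖pʲ_l pʲ_{l+1}‖. -/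
noncomputable section

/-- An admissible step of a warping path: one or both indices increase by 1. -/
def WStep (a b : ℕ × ℕ) : Prop :=
  b = (a.1 + 1, a.2) ∨ b = (a.1, a.2 + 1) ∨ b = (a.1 + 1, a.2 + 1)

/-- A (0-based) warping path between trajectories with points indexed by
`0,…,n₁` and `0,…,n₂`: it starts at `(0,0)`, ends at `(n₁,n₂)`, and each step
increments one or both indices by 1. -/
def IsWarpingPath (n₁ n₂ : ℕ) (W : List (ℕ × ℕ)) : Prop :=
  W.head? = some (0, 0) ∧ W.getLast? = some (n₁, n₂) ∧ List.Chain' WStep W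

/-- Evaluation of a trajectory at a natural-number index (clamped; a no-op for
in-range indices, which are the only ones occurring along a warping path). -/
def fget {n : ℕ} (p : Fin (n + 1) → E2) (k : ℕ) : E2 :=
  p ⟨min k n, Nat.lt_succ_of_le (min_le_right _ _)⟩

/-- Discrete Fréchet distance: minimum over warping paths of the maximum matched
pair distance. -/
def dFrechet {n₁ n₂ : ℕ} (p : Fin (n₁ + 1) → E2) (q : Fin (n₂ + 1) → E2) : ℝ :=
  sInf {c | ∃ W : List (ℕ × ℕ), IsWarpingPath n₁ n₂ W ∧
    c = (W.map fun w => dist (fget p w.1) (fget q w.2)).foldr max 0}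

/-- Dynamic Time Warping distance: minimum over warping paths of the sum of matched
pair distances. -/
def DTW {n₁ n₂ : ℕ} (p : Fin (n₁ + 1) → E2) (q : Fin (n₂ + 1) → E2) : ℝ :=
  sInf {c | ∃ W : List (ℕ × ℕ), IsWarpingPath n₁ n₂ W ∧
    c = (W.map fun w => dist (fget p w.1) (fget q w.2)).sum}

/-- Uniform-speed piecewise linear parametrization of the polygonal trajectory `p`
on `[0,1]`. -/
def polyParam {n : ℕ} (p : Fin (n + 1) → E2) (t : ℝ) : E2 :=
  letI i : ℕ := min ⌊t * n⌋₊ (n - 1)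
  fget p i + (t * n - i) • (fget p (i + 1) - fget p i)

/-- Continuous Fréchet distance between two polygonal trajectories: the infimum over
continuous nondecreasing surjective reparametrizations of `[0,1]` of the supremum of
the pointwise distance between the curves. -/
def FrechetDist {n₁ n₂ : ℕ} (p : Fin (n₁ + 1) → E2) (q : Fin (n₂ + 1) → E2) : ℝ :=
  sInf {c | ∃ α β : ℝ → ℝ,
    ContinuousOn α (Set.Icc 0 1) ∧ ContinuousOn β (Set.Icc 0 1) ∧
    MonotoneOn α (Set.Icc 0 1) ∧ MonotoneOn β (Set.Icc 0 1) ∧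
    α '' Set.Icc 0 1 = Set.Icc 0 1 ∧ β '' Set.Icc 0 1 = Set.Icc 0 1 ∧
    c = ⨆ t : Set.Icc (0 : ℝ) 1, dist (polyParam p (α t)) (polyParam q (β t))}

-- ====== helper lemmas ======

theorem foldr_max_nonneg (l : List ℝ) : 0 ≤ l.foldr max 0 := by
  induction l with
  | nil => simp
  | cons a l ih => simpa using Or.inr ih

theorem le_foldr_max {l : List ℝ} {x : ℝ} (h : x ∈ l) : x ≤ l.foldr max 0 := by
  induction l with
  | nil => simp at h
  | cons a l ih =>
    rcases List.mem_cons.1 h with h | h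
    · simp [h]
    · exact le_trans (ih h) (by simp)

theorem foldr_max_le {l : List ℝ} {K : ℝ} (h0 : 0 ≤ K) (h : ∀ x ∈ l, x ≤ K) :
    l.foldr max 0 ≤ K := by
  induction l with
  | nil => simpa
  | cons a l ih =>
    simp only [List.foldr_cons, max_le_iff]
    exact ⟨h a (by simp), ih fun x hx => h x (List.mem_cons_of_mem _ hx)⟩

theorem dist_affine (A B C D : E2) {s : ℝ} (hs0 : 0 ≤ s) (hs1 : s ≤ 1) :
    dist (A + s • (B - A)) (C + s • (D - C)) ≤ max (dist A C) (dist B D) := by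
  have key : (A + s • (B - A)) - (C + s • (D - C)) = (1 - s) • (A - C) + s • (B - D) := by
    module
  rw [dist_eq_norm, key]
  calc ‖(1 - s) • (A - C) + s • (B - D)‖
      ≤ ‖(1 - s) • (A - C)‖ + ‖s • (B - D)‖ := norm_add_le _ _
    _ = (1 - s) * ‖A - C‖ + s * ‖B - D‖ := by
        rw [norm_smul, norm_smul, Real.norm_of_nonneg (by linarith), Real.norm_of_nonneg hs0]
    _ ≤ (1 - s) * max (dist A C) (dist B D) + s * max (dist A C) (dist B D) := by
        rw [← dist_eq_norm, ← dist_eq_norm]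
        gcongr
        · exact le_max_left _ _
        · exact le_max_right _ _
    _ = max (dist A C) (dist B D) := by ring

theorem dist_affine_pt (A B C : E2) {s : ℝ} (hs0 : 0 ≤ s) (hs1 : s ≤ 1) :
    dist (A + s • (B - A)) C ≤ max (dist A C) (dist B C) := by
  have := dist_affine A B C C hs0 hs1
  simpa using this

theorem dist_affine_base (A B : E2) {s : ℝ} (hs0 : 0 ≤ s) (hs1 : s ≤ 1) :
    dist (A + s • (B - A)) A ≤ dist A B := by
  rw [dist_eq_norm, add_sub_cancel_left, norm_smul, Real.norm_of_nonneg hs0, dist_eq_norm]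
  calc s * ‖B - A‖ ≤ 1 * ‖B - A‖ := by gcongr
    _ = ‖A - B‖ := by rw [one_mul, norm_sub_rev]

theorem fget_min {n : ℕ} (p : Fin (n + 1) → E2) (k : ℕ) : fget p (min k n) = fget p k := by
  simp [fget, min_assoc]

theorem fget_ge {n : ℕ} (p : Fin (n + 1) → E2) {k : ℕ} (h : n ≤ k) : fget p k = fget p n := by
  simp [fget, min_eq_right h]

-- Lemma D
theorem polyParam_eq {n : ℕ} (p : Fin (n + 1) → E2) {x s : ℝ} (a : ℕ)
    (hx0 : 0 ≤ x) (hx1 : x ≤ 1) (hs0 : 0 ≤ s) (hs1 : s ≤ 1) (h : x * n = a + s) :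
    polyParam p x = fget p a + s • (fget p (a + 1) - fget p a) := by
  have hxn0 : 0 ≤ x * n := mul_nonneg hx0 (Nat.cast_nonneg n)
  have hxnn : x * n ≤ n := by
    calc x * n ≤ 1 * n := by gcongr
      _ = n := one_mul _
  rcases Nat.eq_zero_or_pos n with hn | hn
  · subst hn
    have hz : x * (0:ℕ) = 0 := by push_cast; ring
    have ha0 : (a : ℝ) = 0 ∧ s = 0 := by
      rw [hz] at h
      constructor <;> nlinarith [Nat.cast_nonneg (α := ℝ) a]
    have ha : a = 0 := by exact_mod_cast ha0.1
    subst ha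
    rw [ha0.2, polyParam]
    norm_num
  -- n ≥ 1
  have hn1 : (1 : ℝ) ≤ n := by exact_mod_cast hn
  rcases lt_or_eq_of_le hs1 with hslt | hseq
  · rcases le_or_gt a (n - 1) with hale | hagt
    · -- floor = a
      have hfl : ⌊x * n⌋₊ = a := by
        rw [Nat.floor_eq_iff hxn0]
        constructor
        · rw [h]; linarith
        · rw [h]; push_cast; linarith
      rw [polyParam, hfl, min_eq_left hale]
      have : x * n - a = s := by linarith
      rw [this]
    · -- a > n-1, so a ≥ n; then x*n = n, a = n, s = 0
      have han : n ≤ a := by omega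
      have hanR : (n : ℝ) ≤ a := by exact_mod_cast han
      have hs0' : s = 0 := by linarith
      have haeq : (a : ℝ) = n := by linarith
      have haeqN : a = n := by exact_mod_cast haeq
      have hxn : x * n = n := by rw [h, haeq, hs0']; ring
      have hfl : ⌊x * n⌋₊ = n := by rw [hxn]; exact Nat.floor_natCast n
      rw [polyParam, hfl, min_eq_right (Nat.sub_le n 1), hxn]
      have hsub : n - 1 + 1 = n := Nat.succ_pred_eq_of_pos hn
      have hcast : ((n - 1 : ℕ) : ℝ) = (n : ℝ) - 1 := by
        push_cast [Nat.cast_sub hn]; ring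
      rw [hsub, hcast, hs0', haeqN]
      have : (n : ℝ) - ((n : ℝ) - 1) = 1 := by ring
      rw [this, one_smul, zero_smul, add_zero]
      abel
  · -- s = 1
    subst hseq
    rcases le_or_gt (a + 1) (n - 1) with hle | hgt
    · have hfl : ⌊x * n⌋₊ = a + 1 := by
        rw [h, show (a:ℝ)+1 = ((a+1 : ℕ):ℝ) by push_cast; ring]
        exact Nat.floor_natCast _
      rw [polyParam, hfl, min_eq_left hle, h]
      push_cast
      rw [show (a:ℝ) + 1 - ((a:ℝ)+1) = 0 by ring, zero_smul, add_zero, one_smul]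
      abel
    · -- a + 1 ≥ n, and x*n = a+1 ≤ n hence a+1 = n
      have h1 : (a : ℝ) + 1 ≤ n := by rw [← h]; exact hxnn
      have h2 : n ≤ a + 1 := by omega
      have h2R : (n : ℝ) ≤ a + 1 := by exact_mod_cast h2
      have haeq : a + 1 = n := le_antisymm (by exact_mod_cast h1) h2
      have hxn : x * n = n := by
        rw [h, ← haeq]; push_cast; ring
      have hfl : ⌊x * n⌋₊ = n := by rw [hxn]; exact Nat.floor_natCast n
      have han1 : n - 1 = a := by omega
      rw [polyParam, hfl, min_eq_right (Nat.sub_le n 1), han1, hxn]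
      have : (n : ℝ) - a = 1 := by
        have : ((a : ℝ) + 1) = n := by exact_mod_cast haeq
        linarith
      rw [this]

-- Lemma E: decomposition of any x ∈ [0,1]
theorem exists_decomp (n : ℕ) {x : ℝ} (hx0 : 0 ≤ x) (hx1 : x ≤ 1) :
    ∃ (a : ℕ) (s : ℝ), a ≤ n ∧ 0 ≤ s ∧ s ≤ 1 ∧ x * n = a + s := by
  have hxn0 : 0 ≤ x * n := mul_nonneg hx0 (Nat.cast_nonneg n)
  have hxnn : x * n ≤ n := by calc x * n ≤ 1 * n := by gcongr
                                  _ = n := one_mul _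
  rcases lt_or_eq_of_le hxnn with hlt | heq
  · refine ⟨⌊x * n⌋₊, x * n - ⌊x * n⌋₊, ?_, ?_, ?_, by ring⟩
    · calc ⌊x * n⌋₊ ≤ ⌊(n:ℝ)⌋₊ := Nat.floor_mono hxnn
        _ = n := Nat.floor_natCast n
    · linarith [Nat.floor_le hxn0]
    · linarith [Nat.lt_floor_add_one (x * n)]
  · rcases Nat.eq_zero_or_pos n with hn | hn
    · exact ⟨0, 0, by omega, le_refl _, zero_le_one, by rw [heq, hn]; norm_num⟩
    · refine ⟨n - 1, 1, Nat.sub_le n 1, zero_le_one, le_refl _, ?_⟩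
      rw [heq]
      have : ((n - 1 : ℕ) : ℝ) = (n : ℝ) - 1 := by
        have h1 : (1:ℝ) ≤ n := by exact_mod_cast hn
        push_cast [Nat.cast_sub hn]; ring
      rw [this]; ring

-- Lemma F: norm bound
theorem polyParam_norm_le {n : ℕ} (p : Fin (n + 1) → E2) {x : ℝ} (hx0 : 0 ≤ x) (hx1 : x ≤ 1) :
    ‖polyParam p x‖ ≤ ⨆ k : Fin (n + 1), ‖p k‖ := by
  obtain ⟨a, s, _, hs0, hs1, hd⟩ := exists_decomp n hx0 hx1
  rw [polyParam_eq p a hx0 hx1 hs0 hs1 hd]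
  have hb : BddAbove (Set.range fun k : Fin (n+1) => ‖p k‖) :=
    Set.Finite.bddAbove (Set.finite_range _)
  have h1 : ‖fget p a‖ ≤ ⨆ k : Fin (n + 1), ‖p k‖ := le_ciSup hb _
  have h2 : ‖fget p (a+1)‖ ≤ ⨆ k : Fin (n + 1), ‖p k‖ := le_ciSup hb _
  calc ‖fget p a + s • (fget p (a + 1) - fget p a)‖
      = ‖(1 - s) • fget p a + s • fget p (a+1)‖ := by congr 1; module
    _ ≤ ‖(1 - s) • fget p a‖ + ‖s • fget p (a+1)‖ := norm_add_le _ _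
    _ = (1 - s) * ‖fget p a‖ + s * ‖fget p (a+1)‖ := by
        rw [norm_smul, norm_smul, Real.norm_of_nonneg (by linarith), Real.norm_of_nonneg hs0]
    _ ≤ (1 - s) * (⨆ k : Fin (n + 1), ‖p k‖) + s * (⨆ k : Fin (n + 1), ‖p k‖) := by
        gcongr <;> linarith
    _ = ⨆ k : Fin (n + 1), ‖p k‖ := by ring

-- edge length bound
theorem edge_le {n : ℕ} (q : Fin (n + 1) → E2) (a : ℕ) :
    dist (fget q a) (fget q (a + 1)) ≤ ⨆ l : Fin n, dist (q l.castSucc) (q l.succ) := by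
  have hnn : (0:ℝ) ≤ ⨆ l : Fin n, dist (q l.castSucc) (q l.succ) :=
    Real.iSup_nonneg fun l => dist_nonneg
  rcases lt_or_ge a n with h | h
  · have hb : BddAbove (Set.range fun l : Fin n => dist (q l.castSucc) (q l.succ)) :=
      Set.Finite.bddAbove (Set.finite_range _)
    have := le_ciSup hb (⟨a, h⟩ : Fin n)
    have e1 : fget q a = q (Fin.castSucc ⟨a, h⟩) := by
      simp [fget, Fin.castSucc, min_eq_left h.le]
    have e2 : fget q (a+1) = q (Fin.succ ⟨a, h⟩) := by
      simp [fget, Fin.succ, min_eq_left (Nat.succ_le_of_lt h)]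
    rw [e1, e2]; exact this
  · have h2 : n ≤ a + 1 := le_trans h (Nat.le_succ a)
    rw [fget_ge q h, fget_ge q h2]
    simpa using hnn

-- existence of vertex-hitting times
theorem exists_param_times (α : ℝ → ℝ) (hm : MonotoneOn α (Set.Icc 0 1))
    (him : α '' Set.Icc 0 1 = Set.Icc 0 1) (n : ℕ) :
    ∃ T : ℕ → ℝ, T 0 = 0 ∧ Monotone T ∧ (∀ i, T i ∈ Set.Icc (0:ℝ) 1) ∧
      (∀ i, n ≠ 0 → α (T i) = min i n / n) := by
  have hsurj : ∀ r : ℝ, 0 ≤ r → r ≤ 1 → ∃ t, t ∈ Set.Icc (0:ℝ) 1 ∧ α t = r := by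
    intro r h0 h1
    have hr : r ∈ Set.Icc (0:ℝ) 1 := Set.mem_Icc.2 ⟨h0, h1⟩
    rw [← him] at hr
    obtain ⟨t, ht, hat⟩ := hr
    exact ⟨t, ht, hat⟩
  have hmem0 : (0:ℝ) ∈ Set.Icc (0:ℝ) 1 := by norm_num
  have hmem1 : (1:ℝ) ∈ Set.Icc (0:ℝ) 1 := by norm_num
  have hα0 : α 0 = 0 := by
    obtain ⟨t, ht, hat⟩ := hsurj 0 le_rfl zero_le_one
    have h1 : α 0 ≤ α t := hm hmem0 ht ht.1
    have h2 : α 0 ∈ Set.Icc (0:ℝ) 1 := him ▸ Set.mem_image_of_mem α hmem0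
    rw [hat] at h1
    exact le_antisymm h1 h2.1
  have hα1 : α 1 = 1 := by
    obtain ⟨t, ht, hat⟩ := hsurj 1 zero_le_one le_rfl
    have h1 : α t ≤ α 1 := hm ht hmem1 ht.2
    have h2 : α 1 ∈ Set.Icc (0:ℝ) 1 := him ▸ Set.mem_image_of_mem α hmem1
    rw [hat] at h1
    exact le_antisymm h2.2 h1
  have hch : ∀ i : ℕ, ∃ t, t ∈ Set.Icc (0:ℝ) 1 ∧ ((0 < i ∧ i < n) → α t = i / n) := by
    intro i
    rcases Classical.em (0 < i ∧ i < n) with hi | hi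
    · have hnpos : 0 < n := by omega
      have hnR : (0:ℝ) < n := by exact_mod_cast hnpos
      obtain ⟨t, ht, hat⟩ := hsurj ((i : ℝ) / n) (by positivity) (by
        rw [div_le_one hnR]; exact_mod_cast hi.2.le)
      exact ⟨t, ht, fun _ => hat⟩
    · exact ⟨0, hmem0, fun h => absurd h hi⟩
  choose ch hch1 hch2 using hch
  set T : ℕ → ℝ := fun i => if i = 0 then 0 else if n ≤ i then 1 else ch i with hT
  have hT0 : T 0 = 0 := by simp [hT]
  have hTmem : ∀ i, T i ∈ Set.Icc (0:ℝ) 1 := by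
    intro i; rw [hT]; dsimp only
    split
    · exact hmem0
    · split
      · exact hmem1
      · exact hch1 i
  have hTval : ∀ i, n ≠ 0 → α (T i) = min i n / n := by
    intro i hn; rw [hT]; dsimp only
    split
    · subst ‹i = 0›; simp [hα0]
    · split
      · rename_i h1 h2
        rw [hα1, min_eq_right h2, eq_comm, div_eq_one_iff_eq]
        exact Nat.cast_ne_zero.2 hn
      · rename_i h1 h2
        have hi : 0 < i ∧ i < n := by omega
        rw [hch2 i hi, min_eq_left (by omega)]
  refine ⟨T, hT0, ?_, hTmem, hTval⟩
  have key : ∀ i, T i ≤ T (i + 1) := by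
    intro i
    by_cases hi0 : i = 0
    · subst hi0; rw [hT0]; exact (hTmem 1).1
    · by_cases hin : n ≤ i + 1
      · have h1 : T (i+1) = 1 := by simp [hT, hin]
        rw [h1]; exact (hTmem i).2
      · have hn0 : n ≠ 0 := by omega
        have hv1 : α (T i) = (i : ℝ) / n := by
          rw [hTval i hn0, min_eq_left (by omega)]
        have hv2 : α (T (i+1)) = ((i : ℝ) + 1) / n := by
          rw [hTval (i+1) hn0, min_eq_left (by omega)]
          push_cast; ring_nf
        by_contra hcon
        push_neg at hcon
        have hle := hm (hTmem (i+1)) (hTmem i) hcon.le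
        rw [hv1, hv2] at hle
        have hnR : (0:ℝ) < n := by exact_mod_cast Nat.pos_of_ne_zero hn0
        rw [div_le_div_iff₀ hnR hnR] at hle
        nlinarith
  exact monotone_nat_of_le_succ key

-- ====== piecewise linear real functions ======

def clamp01 (x : ℝ) : ℝ := max 0 (min x 1)

theorem clamp01_mono : Monotone clamp01 :=
  fun _ _ h => max_le_max le_rfl (min_le_min h le_rfl)

theorem clamp01_of_nonpos {x : ℝ} (h : x ≤ 0) : clamp01 x = 0 := by
  unfold clamp01; rw [max_eq_left]; exact le_trans (min_le_left _ _) h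

theorem clamp01_of_ge_one {x : ℝ} (h : 1 ≤ x) : clamp01 x = 1 := by
  unfold clamp01; rw [min_eq_right h, max_eq_right zero_le_one]

theorem clamp01_of_mem {x : ℝ} (h0 : 0 ≤ x) (h1 : x ≤ 1) : clamp01 x = x := by
  unfold clamp01; rw [min_eq_left h1, max_eq_right h0]

theorem clamp01_continuous : Continuous clamp01 :=
  continuous_const.max (continuous_id.min continuous_const)

def pl (v : ℕ → ℝ) (M : ℕ) (t : ℝ) : ℝ :=
  v 0 + ∑ i ∈ Finset.range M, (v (i + 1) - v i) * clamp01 (t * M - i)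

theorem pl_continuous (v : ℕ → ℝ) (M : ℕ) : Continuous (pl v M) := by
  unfold pl
  refine continuous_const.add (continuous_finset_sum _ fun i _ => ?_)
  exact continuous_const.mul (clamp01_continuous.comp (by fun_prop))

theorem pl_monotone (v : ℕ → ℝ) (M : ℕ) (hv : ∀ i < M, v i ≤ v (i + 1)) :
    Monotone (pl v M) := by
  intro a b hab
  unfold pl
  refine add_le_add le_rfl (Finset.sum_le_sum fun i hi => ?_)
  have hM : (0:ℝ) ≤ M := Nat.cast_nonneg M
  refine mul_le_mul_of_nonneg_left ?_ (by linarith [hv i (Finset.mem_range.1 hi)])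
  exact clamp01_mono (by nlinarith)

theorem pl_zero (v : ℕ → ℝ) (M : ℕ) : pl v M 0 = v 0 := by
  unfold pl
  rw [Finset.sum_eq_zero, add_zero]
  intro i hi
  rw [clamp01_of_nonpos (by simp), mul_zero]

theorem pl_one (v : ℕ → ℝ) (M : ℕ) : pl v M 1 = v M := by
  unfold pl
  have : ∀ i ∈ Finset.range M, (v (i + 1) - v i) * clamp01 (1 * M - i) = v (i+1) - v i := by
    intro i hi
    rw [clamp01_of_ge_one, mul_one]
    have : (i:ℝ) + 1 ≤ M := by exact_mod_cast Finset.mem_range.1 hi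
    linarith
  rw [Finset.sum_congr rfl this, Finset.sum_range_sub]
  ring

theorem pl_eval (v : ℕ → ℝ) (M : ℕ) (hM : 1 ≤ M) {t : ℝ} (ht0 : 0 ≤ t) (ht1 : t ≤ 1)
    {j : ℕ} (hj : j = min ⌊t * M⌋₊ (M - 1)) :
    pl v M t = v j + (t * M - j) * (v (j + 1) - v j) := by
  set u := t * M with hu
  have hu0 : 0 ≤ u := mul_nonneg ht0 (Nat.cast_nonneg M)
  have huM : u ≤ M := by rw [hu]; calc t * M ≤ 1 * M := by gcongr
                                       _ = M := one_mul _
  have hjM : j ≤ M - 1 := hj ▸ min_le_right _ _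
  have hjM' : j < M := by omega
  have hju : (j:ℝ) ≤ u := by
    rcases le_or_gt ⌊u⌋₊ (M - 1) with h | h
    · rw [hj, min_eq_left h]; exact Nat.floor_le hu0
    · rw [hj, min_eq_right h.le]
      calc ((M - 1 : ℕ):ℝ) ≤ (⌊u⌋₊ : ℝ) := by exact_mod_cast h.le
        _ ≤ u := Nat.floor_le hu0
  have huj : u ≤ j + 1 := by
    rcases le_or_gt ⌊u⌋₊ (M - 1) with h | h
    · rw [hj, min_eq_left h]; exact (Nat.lt_floor_add_one u).le
    · rw [hj, min_eq_right h.le]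
      have : ((M - 1 : ℕ):ℝ) + 1 = M := by
        have : (1:ℝ) ≤ M := by exact_mod_cast hM
        push_cast [Nat.cast_sub hM]; ring
      rw [this]; exact huM
  unfold pl
  have hsplit : ∀ i ∈ Finset.range M, (v (i + 1) - v i) * clamp01 (u - i) =
      (if i < j then v (i+1) - v i else if i = j then (v (j+1) - v j) * (u - j) else 0) := by
    intro i hi
    rcases lt_trichotomy i j with h | h | h
    · rw [if_pos h, clamp01_of_ge_one, mul_one]
      have : (i:ℝ) + 1 ≤ j := by exact_mod_cast h
      linarith
    · subst h
      rw [if_neg (lt_irrefl i), if_pos rfl, clamp01_of_mem (by linarith) (by linarith)]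
    · rw [if_neg (by omega), if_neg (by omega), clamp01_of_nonpos, mul_zero]
      have : (j:ℝ) + 1 ≤ i := by exact_mod_cast h
      linarith
  rw [Finset.sum_congr rfl hsplit]
  have hzero : ∀ i ∈ Finset.range M, i ∉ Finset.range (j + 1) →
      (if i < j then v (i+1) - v i else if i = j then (v (j+1) - v j) * (u - j) else 0) = 0 := by
    intro i _ hi2
    rw [Finset.mem_range] at hi2
    rw [if_neg (by omega), if_neg (by omega)]
  rw [← Finset.sum_subset (Finset.range_subset_range.2 (by omega : j + 1 ≤ M)) hzero]
  rw [Finset.sum_range_succ, if_neg (lt_irrefl j), if_pos rfl]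
  have : ∀ i ∈ Finset.range j, (if i < j then v (i+1) - v i else if i = j then (v (j+1) - v j) * (u - j) else 0) = v (i+1) - v i := by
    intro i hi
    rw [if_pos (Finset.mem_range.1 hi)]
  rw [Finset.sum_congr rfl this, Finset.sum_range_sub]
  ring

theorem pl_image (v : ℕ → ℝ) (M : ℕ) (hv : ∀ i < M, v i ≤ v (i + 1))
    (h0 : v 0 = 0) (h1 : v M = 1) : pl v M '' Set.Icc 0 1 = Set.Icc 0 1 := by
  have hc : ContinuousOn (pl v M) (Set.Icc 0 1) := (pl_continuous v M).continuousOn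
  have hmono := pl_monotone v M hv
  apply Set.Subset.antisymm
  · rintro y ⟨t, ht, rfl⟩
    constructor
    · rw [← h0, ← pl_zero v M]; exact hmono ht.1
    · rw [← h1, ← pl_one v M]; exact hmono ht.2
  · have := intermediate_value_Icc (zero_le_one (α := ℝ)) hc
    rw [pl_zero, pl_one, h0, h1] at this
    exact this

-- ====== part 1: Fréchet ≤ discrete cost of any warping path ======

theorem index_bounds (M : ℕ) (hM : 1 ≤ M) {t : ℝ} (ht0 : 0 ≤ t) (ht1 : t ≤ 1)
    {j : ℕ} (hj : j = min ⌊t * M⌋₊ (M - 1)) :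
    j ≤ M - 1 ∧ (j:ℝ) ≤ t * M ∧ t * M ≤ j + 1 := by
  set u := t * M with hu
  have hu0 : 0 ≤ u := mul_nonneg ht0 (Nat.cast_nonneg M)
  have huM : u ≤ M := by rw [hu]; calc t * M ≤ 1 * M := by gcongr
                                       _ = M := one_mul _
  refine ⟨hj ▸ min_le_right _ _, ?_, ?_⟩
  · rcases le_or_gt ⌊u⌋₊ (M - 1) with h | h
    · rw [hj, min_eq_left h]; exact Nat.floor_le hu0
    · rw [hj, min_eq_right h.le]
      calc ((M - 1 : ℕ):ℝ) ≤ (⌊u⌋₊ : ℝ) := by exact_mod_cast h.le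
        _ ≤ u := Nat.floor_le hu0
  · rcases le_or_gt ⌊u⌋₊ (M - 1) with h | h
    · rw [hj, min_eq_left h]; exact (Nat.lt_floor_add_one u).le
    · rw [hj, min_eq_right h.le]
      have : ((M - 1 : ℕ):ℝ) + 1 = M := by push_cast [Nat.cast_sub hM]; ring
      rw [this]; exact huM

theorem frechet_le_cost {n₁ n₂ : ℕ} (p : Fin (n₁ + 1) → E2) (q : Fin (n₂ + 1) → E2)
    (W : List (ℕ × ℕ)) (hW : IsWarpingPath n₁ n₂ W) :
    FrechetDist p q ≤ (W.map fun w => dist (fget p w.1) (fget q w.2)).foldr max 0 := by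
  obtain ⟨hhead, hlast, hchain⟩ := hW
  set D := (W.map fun w => dist (fget p w.1) (fget q w.2)).foldr max 0 with hD
  set w : ℕ → ℕ × ℕ := fun k => W.getD k (0, 0) with hwdef
  have hne : W ≠ [] := by intro h; rw [h] at hhead; simp at hhead
  set m := W.length with hm
  have hm1 : 1 ≤ m := List.length_pos_iff.2 hne
  have hw0 : w 0 = (0, 0) := by
    rcases W with _ | ⟨a, l⟩
    · exact absurd rfl hne
    · simp only [List.head?_cons, Option.some_inj] at hhead
      simpa [hwdef] using hhead
  have hwlast : w (m - 1) = (n₁, n₂) := by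
    rw [List.getLast?_eq_getLast_of_ne_nil hne, Option.some_inj] at hlast
    rw [hwdef]; dsimp only
    rw [List.getD_eq_getElem _ _ (by omega), ← List.getLast_eq_getElem hne, hlast]
  have hstep : ∀ k, k + 1 < m → WStep (w k) (w (k + 1)) := by
    intro k hk
    have := List.isChain_iff_getElem.1 hchain k (by omega)
    rw [hwdef]; dsimp only
    rw [List.getD_eq_getElem _ _ (by omega), List.getD_eq_getElem _ _ (by omega)]
    simpa [List.get_eq_getElem] using this
  have hmem : ∀ k, k < m → w k ∈ W := by
    intro k hk
    rw [hwdef]; dsimp only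
    rw [List.getD_eq_getElem _ _ hk]
    exact List.getElem_mem _
  have hterm : ∀ k, k < m → dist (fget p (w k).1) (fget q (w k).2) ≤ D := by
    intro k hk
    exact le_foldr_max (List.mem_map_of_mem (hmem k hk))
  have hD0 : 0 ≤ D := foldr_max_nonneg _
  -- coordinates monotone and bounded
  have hcoord : ∀ d k, k + d ≤ m - 1 → (w k).1 ≤ (w (k + d)).1 ∧ (w k).2 ≤ (w (k + d)).2 := by
    intro d
    induction d with
    | zero => intro k _; exact ⟨le_rfl, le_rfl⟩
    | succ d ih =>
      intro k hk
      have h1 := ih k (by omega)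
      have h2 := hstep (k + d) (by omega)
      rcases h2 with h | h | h <;>
        rw [show k + (d+1) = (k+d) + 1 from rfl, h] <;> simp <;> omega
  have hbound : ∀ k, k ≤ m - 1 → (w k).1 ≤ n₁ ∧ (w k).2 ≤ n₂ := by
    intro k hk
    have := hcoord (m - 1 - k) k (by omega)
    rw [show k + (m - 1 - k) = m - 1 from by omega, hwlast] at this
    exact this
  -- reduce to exhibiting an element of the Fréchet candidate set that is ≤ D
  have hbdd : BddBelow {c | ∃ α β : ℝ → ℝ,
      ContinuousOn α (Set.Icc 0 1) ∧ ContinuousOn β (Set.Icc 0 1) ∧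
      MonotoneOn α (Set.Icc 0 1) ∧ MonotoneOn β (Set.Icc 0 1) ∧
      α '' Set.Icc 0 1 = Set.Icc 0 1 ∧ β '' Set.Icc 0 1 = Set.Icc 0 1 ∧
      c = ⨆ t : Set.Icc (0 : ℝ) 1, dist (polyParam p (α t)) (polyParam q (β t))} := by
    refine ⟨0, fun c hc => ?_⟩
    obtain ⟨α, β, _, _, _, _, _, _, rfl⟩ := hc
    exact Real.iSup_nonneg fun t => dist_nonneg
  suffices h : ∃ c, (∃ α β : ℝ → ℝ,
      ContinuousOn α (Set.Icc 0 1) ∧ ContinuousOn β (Set.Icc 0 1) ∧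
      MonotoneOn α (Set.Icc 0 1) ∧ MonotoneOn β (Set.Icc 0 1) ∧
      α '' Set.Icc 0 1 = Set.Icc 0 1 ∧ β '' Set.Icc 0 1 = Set.Icc 0 1 ∧
      c = ⨆ t : Set.Icc (0 : ℝ) 1, dist (polyParam p (α t)) (polyParam q (β t))) ∧ c ≤ D by
    obtain ⟨c, hc, hcD⟩ := h
    exact le_trans (csInf_le hbdd hc) hcD
  rcases eq_or_lt_of_le hm1 with hm1' | hm2
  · -- m = 1 : n₁ = n₂ = 0
    have h00 : w 0 = (n₁, n₂) := by rw [← hwlast, ← hm1']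
    have hn1 : n₁ = 0 := by rw [hw0] at h00; exact (Prod.mk.injEq _ _ _ _ ▸ h00).1.symm
    have hn2 : n₂ = 0 := by rw [hw0] at h00; exact (Prod.mk.injEq _ _ _ _ ▸ h00).2.symm
    refine ⟨dist (polyParam p 0) (polyParam q 0), ⟨id, id, continuousOn_id, continuousOn_id,
      monotoneOn_id, monotoneOn_id, Set.image_id _, Set.image_id _, ?_⟩, ?_⟩
    · subst hn1; subst hn2
      have hconst : ∀ x : ℝ, polyParam p x = polyParam p 0 := by
        intro x; unfold polyParam; norm_num
      have hconst' : ∀ x : ℝ, polyParam q x = polyParam q 0 := by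
        intro x; unfold polyParam; norm_num
      rw [eq_comm]
      have : ∀ t : Set.Icc (0:ℝ) 1, dist (polyParam p (id (t:ℝ))) (polyParam q (id (t:ℝ)))
          = dist (polyParam p 0) (polyParam q 0) := by
        intro t; rw [id_eq, hconst (t:ℝ), hconst' (t:ℝ)]
      rw [funext this]
      exact ciSup_const
    · have h1 : polyParam p 0 = fget p 0 := by
        unfold polyParam; norm_num
      have h2 : polyParam q 0 = fget q 0 := by
        unfold polyParam; norm_num
      rw [h1, h2]
      have := hterm 0 (by omega)
      rw [hw0] at this
      exact this
  · -- m ≥ 2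
    set M := m - 1 with hM
    have hM1 : 1 ≤ M := by omega
    have hMR : (1:ℝ) ≤ M := by exact_mod_cast hM1
    set va : ℕ → ℝ := fun i => if n₁ = 0 then (i:ℝ)/M else ((w i).1 : ℝ)/n₁ with hva
    set vb : ℕ → ℝ := fun i => if n₂ = 0 then (i:ℝ)/M else ((w i).2 : ℝ)/n₂ with hvb
    have hvamono : ∀ i, i < M → va i ≤ va (i + 1) := by
      intro i hi
      rw [hva]; dsimp only
      have hMpos : (0:ℝ) < (M:ℝ) := by exact_mod_cast hM1
      split
      · gcongr
        omega
      · have := hstep i (by omega)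
        have hle : (w i).1 ≤ (w (i+1)).1 := by rcases this with h | h | h <;> rw [h] <;> simp
        gcongr
    have hvbmono : ∀ i, i < M → vb i ≤ vb (i + 1) := by
      intro i hi
      rw [hvb]; dsimp only
      have hMpos : (0:ℝ) < (M:ℝ) := by exact_mod_cast hM1
      split
      · gcongr
        omega
      · have := hstep i (by omega)
        have hle : (w i).2 ≤ (w (i+1)).2 := by rcases this with h | h | h <;> rw [h] <;> simp
        gcongr
    have hva0 : va 0 = 0 := by rw [hva]; dsimp only; rw [hw0]; split <;> simp
    have hvb0 : vb 0 = 0 := by rw [hvb]; dsimp only; rw [hw0]; split <;> simp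
    have hvaM : va M = 1 := by
      rw [hva]; dsimp only
      rw [hM, hwlast]
      have hMpos : (0:ℝ) < (M:ℝ) := by exact_mod_cast hM1
      split
      · rename_i h; rw [div_self (ne_of_gt hMpos)]
      · rename_i h; dsimp only; rw [div_eq_one_iff_eq (by exact_mod_cast h)]
    have hvbM : vb M = 1 := by
      rw [hvb]; dsimp only
      rw [hM, hwlast]
      have hMpos : (0:ℝ) < (M:ℝ) := by exact_mod_cast hM1
      split
      · rename_i h; rw [div_self (ne_of_gt hMpos)]
      · rename_i h; dsimp only; rw [div_eq_one_iff_eq (by exact_mod_cast h)]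
    set α := pl va M with hα
    set β := pl vb M with hβ
    refine ⟨_, ⟨α, β, (pl_continuous va M).continuousOn, (pl_continuous vb M).continuousOn,
      (pl_monotone va M hvamono).monotoneOn _, (pl_monotone vb M hvbmono).monotoneOn _,
      pl_image va M hvamono hva0 hvaM, pl_image vb M hvbmono hvb0 hvbM, rfl⟩, ?_⟩
    refine ciSup_le fun t => ?_
    obtain ⟨t, ht0, ht1⟩ := t
    dsimp only
    set j := min ⌊t * M⌋₊ (M - 1) with hj
    obtain ⟨hjM, hju, huj⟩ := index_bounds M hM1 ht0 ht1 hj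
    set s : ℝ := t * M - j with hs
    have hs0 : 0 ≤ s := by rw [hs]; linarith
    have hs1 : s ≤ 1 := by rw [hs]; linarith
    have hαt : α t = va j + s * (va (j+1) - va j) := pl_eval va M hM1 ht0 ht1 hj
    have hβt : β t = vb j + s * (vb (j+1) - vb j) := pl_eval vb M hM1 ht0 ht1 hj
    have hαmem : 0 ≤ α t ∧ α t ≤ 1 := by
      have h1 : α t ∈ α '' Set.Icc 0 1 := Set.mem_image_of_mem _ (Set.mem_Icc.2 ⟨ht0, ht1⟩)
      rw [pl_image va M hvamono hva0 hvaM] at h1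
      exact h1
    have hβmem : 0 ≤ β t ∧ β t ≤ 1 := by
      have h1 : β t ∈ β '' Set.Icc 0 1 := Set.mem_image_of_mem _ (Set.mem_Icc.2 ⟨ht0, ht1⟩)
      rw [pl_image vb M hvbmono hvb0 hvbM] at h1
      exact h1
    -- index bounds on w j, w (j+1)
    have hwj : (w j).1 ≤ n₁ ∧ (w j).2 ≤ n₂ := hbound j (by omega)
    have hwj1 : (w (j+1)).1 ≤ n₁ ∧ (w (j+1)).2 ≤ n₂ := hbound (j+1) (by omega)
    have hA : α t * n₁ = ((w j).1 : ℝ) + s * (((w (j+1)).1 : ℝ) - ((w j).1 : ℝ)) := by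
      rw [hαt, hva]; dsimp only
      split
      · rename_i h
        have e1 : (w j).1 = 0 := by omega
        have e2 : (w (j+1)).1 = 0 := by omega
        rw [e1, e2, h]; push_cast; ring
      · rename_i h
        have hn : (n₁ : ℝ) ≠ 0 := by exact_mod_cast h
        field_simp
    have hB : β t * n₂ = ((w j).2 : ℝ) + s * (((w (j+1)).2 : ℝ) - ((w j).2 : ℝ)) := by
      rw [hβt, hvb]; dsimp only
      split
      · rename_i h
        have e1 : (w j).2 = 0 := by omega
        have e2 : (w (j+1)).2 = 0 := by omega
        rw [e1, e2, h]; push_cast; ring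
      · rename_i h
        have hn : (n₂ : ℝ) ≠ 0 := by exact_mod_cast h
        field_simp
    have hTj := hterm j (by omega)
    have hTj1 := hterm (j+1) (by omega)
    rcases hstep j (by omega) with hst | hst | hst
    · -- horizontal: w (j+1) = ((w j).1 + 1, (w j).2)
      have hA' : α t * n₁ = ((w j).1 : ℝ) + s := by rw [hA, hst]; push_cast; ring
      have hB' : β t * n₂ = ((w j).2 : ℝ) + 0 := by rw [hB, hst]; push_cast; ring
      rw [polyParam_eq p (w j).1 hαmem.1 hαmem.2 hs0 hs1 hA',
          polyParam_eq q (w j).2 hβmem.1 hβmem.2 (le_refl 0) zero_le_one hB',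
          zero_smul, add_zero]
      refine le_trans (dist_affine_pt _ _ _ hs0 hs1) (max_le hTj ?_)
      rw [hst] at hTj1
      exact hTj1
    · -- vertical
      have hA' : α t * n₁ = ((w j).1 : ℝ) + 0 := by rw [hA, hst]; push_cast; ring
      have hB' : β t * n₂ = ((w j).2 : ℝ) + s := by rw [hB, hst]; push_cast; ring
      rw [polyParam_eq q (w j).2 hβmem.1 hβmem.2 hs0 hs1 hB',
          polyParam_eq p (w j).1 hαmem.1 hαmem.2 (le_refl 0) zero_le_one hA',
          zero_smul, add_zero]
      rw [dist_comm]
      refine le_trans (dist_affine_pt _ _ _ hs0 hs1) (max_le (by rw [dist_comm]; exact hTj) ?_)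
      rw [hst] at hTj1
      rw [dist_comm]
      exact hTj1
    · -- diagonal
      have hA' : α t * n₁ = ((w j).1 : ℝ) + s := by rw [hA, hst]; push_cast; ring
      have hB' : β t * n₂ = ((w j).2 : ℝ) + s := by rw [hB, hst]; push_cast; ring
      rw [polyParam_eq p (w j).1 hαmem.1 hαmem.2 hs0 hs1 hA',
          polyParam_eq q (w j).2 hβmem.1 hβmem.2 hs0 hs1 hB']
      refine le_trans (dist_affine _ _ _ _ hs0 hs1) (max_le hTj ?_)
      rw [hst] at hTj1
      exact hTj1

-- ====== part 2: construction of a warping path from reparametrizations ======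

theorem warping_construct (n₁ n₂ : ℕ) (C : ℕ × ℕ → Prop) :
    ∃ W : List (ℕ × ℕ), IsWarpingPath n₁ n₂ W ∧
      ∀ x ∈ W, x.1 ≤ n₁ ∧ x.2 ≤ n₂ ∧
        (∀ P : ℕ × ℕ → Prop, P (0, 0) →
          (∀ i j, P (i, j) → i < n₁ → (n₂ ≤ j ∨ C (i, j)) → P (i + 1, j)) →
          (∀ i j, P (i, j) → j < n₂ → ¬(i < n₁ ∧ (n₂ ≤ j ∨ C (i, j))) → P (i, j + 1)) →
          P x) := by
  classical
  set N := n₁ + n₂ with hN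
  set step : ℕ × ℕ → ℕ × ℕ := fun x =>
    if x.1 < n₁ ∧ (n₂ ≤ x.2 ∨ C x) then (x.1 + 1, x.2)
    else if x.2 < n₂ then (x.1, x.2 + 1) else x with hstepdef
  set f : ℕ → ℕ × ℕ := fun k => step^[k] (0, 0) with hf
  have hf0 : f 0 = (0, 0) := rfl
  have hfs : ∀ k, f (k + 1) = step (f k) := by
    intro k; rw [hf]; exact Function.iterate_succ_apply' step k (0,0)
  have hsum : ∀ k, k ≤ N → (f k).1 + (f k).2 = k ∧ (f k).1 ≤ n₁ ∧ (f k).2 ≤ n₂ := by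
    intro k
    induction k with
    | zero => intro _; simp [hf0]
    | succ k ih =>
      intro hk
      obtain ⟨hs, h1, h2⟩ := ih (by omega)
      rw [hfs, hstepdef]
      dsimp only
      split
      · rename_i h; exact ⟨by omega, by omega, h2⟩
      · split
        · rename_i h h'; exact ⟨by omega, h1, by omega⟩
        · rename_i h h'
          exfalso
          have hj : (f k).2 = n₂ := by omega
          exact h ⟨by omega, Or.inl (by omega)⟩
  have hwstep : ∀ k, k < N → WStep (f k) (f (k + 1)) := by
    intro k hk
    obtain ⟨hs, h1, h2⟩ := hsum k (by omega)
    rw [hfs, hstepdef]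
    dsimp only
    split
    · exact Or.inl rfl
    · split
      · exact Or.inr (Or.inl rfl)
      · rename_i h h'
        exfalso
        have hj : (f k).2 = n₂ := by omega
        exact h ⟨by omega, Or.inl (by omega)⟩
  have hlastf : f N = (n₁, n₂) := by
    obtain ⟨hs, h1, h2⟩ := hsum N le_rfl
    have : (f N).1 = n₁ ∧ (f N).2 = n₂ := by omega
    exact Prod.ext this.1 this.2
  have hclo : ∀ k, k ≤ N → ∀ P : ℕ × ℕ → Prop, P (0, 0) →
      (∀ i j, P (i, j) → i < n₁ → (n₂ ≤ j ∨ C (i, j)) → P (i + 1, j)) →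
      (∀ i j, P (i, j) → j < n₂ → ¬(i < n₁ ∧ (n₂ ≤ j ∨ C (i, j))) → P (i, j + 1)) →
      P (f k) := by
    intro k
    induction k with
    | zero => intro _ P h0 _ _; exact h0
    | succ k ih =>
      intro hk P h0 hc1 hc2
      have hPk := ih (by omega) P h0 hc1 hc2
      obtain ⟨hs, h1, h2⟩ := hsum k (by omega)
      rw [hfs, hstepdef]
      dsimp only
      split
      · rename_i h
        exact hc1 (f k).1 (f k).2 hPk h.1 (by simpa using h.2)
      · split
        · rename_i h h'
          exact hc2 (f k).1 (f k).2 hPk h' (by simpa using h)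
        · exact hPk
  refine ⟨(List.range (N + 1)).map f, ⟨?_, ?_, ?_⟩, ?_⟩
  · rw [List.range_succ_eq_map]
    simp [hf0]
  · have hne : (List.range (N + 1)).map f ≠ [] := by simp
    rw [List.getLast?_eq_getLast_of_ne_nil hne, Option.some_inj,
      List.getLast_eq_getElem hne]
    simp [hlastf]
  · apply List.isChain_iff_getElem.2
    intro i hi
    simp only [List.length_map, List.length_range] at hi
    simp only [List.get_eq_getElem, List.getElem_map, List.getElem_range]
    exact hwstep i (by omega)
  · intro x hx
    rw [List.mem_map] at hx
    obtain ⟨k, hk, rfl⟩ := hx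
    rw [List.mem_range] at hk
    obtain ⟨_, h1, h2⟩ := hsum k (by omega)
    exact ⟨h1, h2, hclo k (by omega)⟩

theorem vertex_dist_le {n : ℕ} (q : Fin (n + 1) → E2) {y : ℝ} (hy0 : 0 ≤ y) (hy1 : y ≤ 1)
    {j : ℕ} (hl : (j : ℝ) ≤ y * n) (hh : y * n ≤ j + 1) :
    dist (polyParam q y) (fget q j) ≤ ⨆ l : Fin n, dist (q l.castSucc) (q l.succ) := by
  have he : y * n = j + (y * n - j) := by ring
  rw [polyParam_eq q j hy0 hy1 (by linarith) (by linarith) he]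
  exact le_trans (dist_affine_base _ _ (by linarith) (by linarith)) (edge_le q j)

theorem vertex_exact {n : ℕ} (p : Fin (n + 1) → E2) {x : ℝ} (hx0 : 0 ≤ x) (hx1 : x ≤ 1)
    {i : ℕ} (h : x * n = i) : polyParam p x = fget p i := by
  have he : x * n = i + 0 := by rw [h]; ring
  rw [polyParam_eq p i hx0 hx1 le_rfl zero_le_one he, zero_smul, add_zero]

theorem discrete_le_cost {n₁ n₂ : ℕ} (p : Fin (n₁ + 1) → E2) (q : Fin (n₂ + 1) → E2)
    (α β : ℝ → ℝ) (hαm : MonotoneOn α (Set.Icc 0 1)) (hβm : MonotoneOn β (Set.Icc 0 1))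
    (hαi : α '' Set.Icc 0 1 = Set.Icc 0 1) (hβi : β '' Set.Icc 0 1 = Set.Icc 0 1) :
    dFrechet p q ≤ (⨆ t : Set.Icc (0 : ℝ) 1, dist (polyParam p (α t)) (polyParam q (β t)))
      + max (⨆ k : Fin n₁, dist (p k.castSucc) (p k.succ))
            (⨆ l : Fin n₂, dist (q l.castSucc) (q l.succ)) := by
  classical
  set εp := ⨆ k : Fin n₁, dist (p k.castSucc) (p k.succ) with hεp
  set εq := ⨆ l : Fin n₂, dist (q l.castSucc) (q l.succ) with hεq
  set c := ⨆ t : Set.Icc (0 : ℝ) 1, dist (polyParam p (α t)) (polyParam q (β t)) with hc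
  have hεp0 : 0 ≤ εp := Real.iSup_nonneg fun _ => dist_nonneg
  have hεq0 : 0 ≤ εq := Real.iSup_nonneg fun _ => dist_nonneg
  have hc0 : 0 ≤ c := Real.iSup_nonneg fun _ => dist_nonneg
  have hαmem : ∀ t ∈ Set.Icc (0:ℝ) 1, α t ∈ Set.Icc (0:ℝ) 1 := by
    intro t ht; rw [← hαi]; exact Set.mem_image_of_mem _ ht
  have hβmem : ∀ t ∈ Set.Icc (0:ℝ) 1, β t ∈ Set.Icc (0:ℝ) 1 := by
    intro t ht; rw [← hβi]; exact Set.mem_image_of_mem _ ht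
  -- bddAbove of the sup family
  have hbddc : BddAbove (Set.range fun t : Set.Icc (0:ℝ) 1 =>
      dist (polyParam p (α t)) (polyParam q (β t))) := by
    refine ⟨(⨆ k : Fin (n₁ + 1), ‖p k‖) + (⨆ k : Fin (n₂ + 1), ‖q k‖), ?_⟩
    rintro y ⟨t, rfl⟩
    have h1 := hαmem t t.2
    have h2 := hβmem t t.2
    calc dist (polyParam p (α t)) (polyParam q (β t))
        ≤ ‖polyParam p (α t)‖ + ‖polyParam q (β t)‖ := dist_le_norm_add_norm _ _
      _ ≤ _ := add_le_add (polyParam_norm_le p h1.1 h1.2) (polyParam_norm_le q h2.1 h2.2)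
  obtain ⟨T, hT0, hTmono, hTmem, hTval⟩ := exists_param_times α hαm hαi n₁
  obtain ⟨S, hS0, hSmono, hSmem, hSval⟩ := exists_param_times β hβm hβi n₂
  obtain ⟨W, hW, hWprop⟩ := warping_construct n₁ n₂ (fun x => T (x.1 + 1) ≤ S (x.2 + 1))
  have hbddD : BddBelow {c | ∃ W : List (ℕ × ℕ), IsWarpingPath n₁ n₂ W ∧
      c = (W.map fun w => dist (fget p w.1) (fget q w.2)).foldr max 0} := by
    refine ⟨0, fun d hd => ?_⟩
    obtain ⟨W', _, rfl⟩ := hd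
    exact foldr_max_nonneg _
  refine le_trans (csInf_le hbddD ⟨W, hW, rfl⟩) ?_
  refine foldr_max_le (by positivity) ?_
  intro x hx
  rw [List.mem_map] at hx
  obtain ⟨w, hwmem, rfl⟩ := hx
  obtain ⟨hi, hj, hP⟩ := hWprop w hwmem
  obtain ⟨i, j⟩ := w
  dsimp only at hi hj hP ⊢
  -- the key invariant
  have hinv : (T i ≤ S (j + 1) ∨ j = n₂) ∧ (S j ≤ T (i + 1) ∨ i = n₁) := by
    refine (hP (fun x => x.1 ≤ n₁ ∧ x.2 ≤ n₂ ∧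
        ((T x.1 ≤ S (x.2 + 1) ∨ x.2 = n₂) ∧ (S x.2 ≤ T (x.1 + 1) ∨ x.1 = n₁)))
      ⟨Nat.zero_le _, Nat.zero_le _, Or.inl (by rw [hT0]; exact (hSmem 1).1),
        Or.inl (by rw [hS0]; exact (hTmem 1).1)⟩ ?_ ?_).2.2
    · rintro a b ⟨ha1, hb1, h1, h2⟩ ha hab
      refine ⟨by omega, hb1, ?_, ?_⟩
      · rcases hab with h | h
        · exact Or.inr (by omega)
        · exact Or.inl h
      · rcases h2 with h | h
        · exact Or.inl (le_trans h (hTmono (by omega)))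
        · exact absurd h (by omega)
    · rintro a b ⟨ha1, hb1, h1, h2⟩ hb hab
      push_neg at hab
      refine ⟨ha1, by omega, ?_, ?_⟩
      · rcases h1 with h | h
        · exact Or.inl (le_trans h (hSmono (by omega)))
        · exact absurd h (by omega)
      · rcases Nat.lt_or_ge a n₁ with h | h
        · have := hab h
          exact Or.inl (this.2).le
        · exact Or.inr (by omega)
  set u := max (T i) (S j) with hu
  have hTi := hTmem i
  have hSj := hSmem j
  have humem : u ∈ Set.Icc (0:ℝ) 1 := ⟨le_trans hTi.1 (le_max_left _ _),
    max_le hTi.2 hSj.2⟩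
  have hαu := hαmem u humem
  have hβu := hβmem u humem
  have hcu : dist (polyParam p (α u)) (polyParam q (β u)) ≤ c :=
    le_ciSup hbddc (⟨u, humem⟩ : Set.Icc (0:ℝ) 1)
  rcases le_total (S j) (T i) with hcase | hcase
  · -- u = T i : p-curve exactly at vertex i
    have huT : u = T i := max_eq_left hcase
    have hexact : polyParam p (α u) = fget p i := by
      rcases Nat.eq_zero_or_pos n₁ with hn | hn
      · have h0 : α u * n₁ = ((0:ℕ) : ℝ) := by rw [hn]; push_cast; ring
        rw [vertex_exact p hαu.1 hαu.2 h0]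
        unfold fget
        have harg : (⟨min 0 n₁, Nat.lt_succ_of_le (min_le_right _ _)⟩ : Fin (n₁+1)) =
            ⟨min i n₁, Nat.lt_succ_of_le (min_le_right _ _)⟩ :=
          Fin.ext (show min 0 n₁ = min i n₁ by omega)
        rw [harg]
      · have hv : α (T i) = ((min i n₁ : ℕ) : ℝ) / n₁ := hTval i (by omega)
        rw [min_eq_left hi] at hv
        have hn0 : (n₁:ℝ) ≠ 0 := by positivity
        have h0 : α u * n₁ = (i : ℝ) := by
          rw [huT, hv]; field_simp
        exact vertex_exact p hαu.1 hαu.2 h0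
    -- q-curve within edge j
    have hlow : (j : ℝ) ≤ β u * n₂ := by
      rcases Nat.eq_zero_or_pos n₂ with hn | hn
      · have hj0 : j = 0 := by omega
        rw [hj0, hn]; push_cast; nlinarith [hβu.1]
      · have hv : β (S j) = ((min j n₂ : ℕ) : ℝ) / n₂ := hSval j (by omega)
        rw [min_eq_left hj] at hv
        have hn0 : (0:ℝ) < n₂ := by exact_mod_cast hn
        have hb : β (S j) ≤ β u := hβm hSj humem (le_max_right _ _)
        rw [hv] at hb
        calc (j:ℝ) = ((j:ℝ) / n₂) * n₂ := by field_simp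
          _ ≤ β u * n₂ := by gcongr
    have hhigh : β u * n₂ ≤ (j : ℝ) + 1 := by
      rcases Nat.eq_zero_or_pos n₂ with hn | hn
      · rw [hn]; push_cast; nlinarith [hβu.1, hβu.2]
      · have hn0 : (0:ℝ) < n₂ := by exact_mod_cast hn
        rcases hinv.1 with hTS | hjn
        · have hb : β u ≤ β (S (j+1)) := hβm humem (hSmem (j+1)) (by rw [huT]; exact hTS)
          have hv : β (S (j+1)) = ((min (j+1) n₂ : ℕ) : ℝ) / n₂ := hSval (j+1) (by omega)
          rw [hv] at hb
          have hminle : ((min (j+1) n₂ : ℕ) : ℝ) ≤ (j:ℝ) + 1 := by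
            exact_mod_cast (by omega : min (j+1) n₂ ≤ j + 1)
          calc β u * n₂ ≤ ((min (j+1) n₂ : ℕ) : ℝ) / n₂ * n₂ :=
              mul_le_mul_of_nonneg_right hb hn0.le
            _ = ((min (j+1) n₂ : ℕ) : ℝ) := by field_simp
            _ ≤ (j:ℝ) + 1 := hminle
        · have : β u * n₂ ≤ 1 * n₂ := by gcongr; exact hβu.2
          rw [one_mul] at this
          have hjn' : (n₂:ℝ) = j := by exact_mod_cast hjn.symm
          linarith
    have hqd : dist (polyParam q (β u)) (fget q j) ≤ εq :=
      vertex_dist_le q hβu.1 hβu.2 hlow hhigh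
    calc dist (fget p i) (fget q j)
        ≤ dist (fget p i) (polyParam q (β u)) + dist (polyParam q (β u)) (fget q j) :=
          dist_triangle _ _ _
      _ = dist (polyParam p (α u)) (polyParam q (β u)) + dist (polyParam q (β u)) (fget q j) := by
          rw [hexact]
      _ ≤ c + εq := add_le_add hcu hqd
      _ ≤ c + max εp εq := by gcongr; exact le_max_right _ _
  · -- u = S j : q-curve exactly at vertex j
    have huS : u = S j := max_eq_right hcase
    have hexact : polyParam q (β u) = fget q j := by
      rcases Nat.eq_zero_or_pos n₂ with hn | hn
      · have h0 : β u * n₂ = ((0:ℕ) : ℝ) := by rw [hn]; push_cast; ring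
        rw [vertex_exact q hβu.1 hβu.2 h0]
        unfold fget
        have harg : (⟨min 0 n₂, Nat.lt_succ_of_le (min_le_right _ _)⟩ : Fin (n₂+1)) =
            ⟨min j n₂, Nat.lt_succ_of_le (min_le_right _ _)⟩ :=
          Fin.ext (show min 0 n₂ = min j n₂ by omega)
        rw [harg]
      · have hv : β (S j) = ((min j n₂ : ℕ) : ℝ) / n₂ := hSval j (by omega)
        rw [min_eq_left hj] at hv
        have hn0 : (n₂:ℝ) ≠ 0 := by positivity
        have h0 : β u * n₂ = (j : ℝ) := by
          rw [huS, hv]; field_simp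
        exact vertex_exact q hβu.1 hβu.2 h0
    have hlow : (i : ℝ) ≤ α u * n₁ := by
      rcases Nat.eq_zero_or_pos n₁ with hn | hn
      · have hi0 : i = 0 := by omega
        rw [hi0, hn]; push_cast; nlinarith [hαu.1]
      · have hv : α (T i) = ((min i n₁ : ℕ) : ℝ) / n₁ := hTval i (by omega)
        rw [min_eq_left hi] at hv
        have hn0 : (0:ℝ) < n₁ := by exact_mod_cast hn
        have hb : α (T i) ≤ α u := hαm hTi humem (le_max_left _ _)
        rw [hv] at hb
        calc (i:ℝ) = ((i:ℝ) / n₁) * n₁ := by field_simp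
          _ ≤ α u * n₁ := by gcongr
    have hhigh : α u * n₁ ≤ (i : ℝ) + 1 := by
      rcases Nat.eq_zero_or_pos n₁ with hn | hn
      · rw [hn]; push_cast; nlinarith [hαu.1, hαu.2]
      · have hn0 : (0:ℝ) < n₁ := by exact_mod_cast hn
        rcases hinv.2 with hST | hin
        · have hb : α u ≤ α (T (i+1)) := hαm humem (hTmem (i+1)) (by rw [huS]; exact hST)
          have hv : α (T (i+1)) = ((min (i+1) n₁ : ℕ) : ℝ) / n₁ := hTval (i+1) (by omega)
          rw [hv] at hb
          have hminle : ((min (i+1) n₁ : ℕ) : ℝ) ≤ (i:ℝ) + 1 := by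
            exact_mod_cast (by omega : min (i+1) n₁ ≤ i + 1)
          calc α u * n₁ ≤ ((min (i+1) n₁ : ℕ) : ℝ) / n₁ * n₁ :=
              mul_le_mul_of_nonneg_right hb hn0.le
            _ = ((min (i+1) n₁ : ℕ) : ℝ) := by field_simp
            _ ≤ (i:ℝ) + 1 := hminle
        · have : α u * n₁ ≤ 1 * n₁ := by gcongr; exact hαu.2
          rw [one_mul] at this
          have hin' : (n₁:ℝ) = i := by exact_mod_cast hin.symm
          linarith
    have hpd : dist (polyParam p (α u)) (fget p i) ≤ εp :=
      vertex_dist_le p hαu.1 hαu.2 hlow hhigh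
    calc dist (fget p i) (fget q j)
        ≤ dist (fget p i) (polyParam p (α u)) + dist (polyParam p (α u)) (fget q j) :=
          dist_triangle _ _ _
      _ ≤ dist (fget p i) (polyParam p (α u)) +
            (dist (polyParam p (α u)) (polyParam q (β u)) +
             dist (polyParam q (β u)) (fget q j)) := by
          gcongr
          exact dist_triangle _ _ _
      _ = dist (polyParam p (α u)) (fget p i) +
            dist (polyParam p (α u)) (polyParam q (β u)) := by
          rw [hexact, dist_self, add_zero, dist_comm]
      _ ≤ εp + c := add_le_add hpd hcu
      _ ≤ c + max εp εq := by
          rw [add_comm]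
          gcongr
          exact le_max_left _ _


/-- The discrete Fréchet distance is sandwiched between the continuous Fréchet
distance and the continuous Fréchet distance plus the maximum edge length. -/
theorem stmt_8 {n₁ n₂ : ℕ} (p : Fin (n₁ + 1) → E2) (q : Fin (n₂ + 1) → E2) :
    letI ε : ℝ := max (⨆ k : Fin n₁, dist (p k.castSucc) (p k.succ))
                      (⨆ l : Fin n₂, dist (q l.castSucc) (q l.succ))
    FrechetDist p q ≤ dFrechet p q ∧ dFrechet p q ≤ FrechetDist p q + ε := by
  show FrechetDist p q ≤ dFrechet p q ∧ dFrechet p q ≤ FrechetDist p q +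
    max (⨆ k : Fin n₁, dist (p k.castSucc) (p k.succ))
        (⨆ l : Fin n₂, dist (q l.castSucc) (q l.succ))
  constructor
  · unfold dFrechet
    apply le_csInf
    · obtain ⟨W, hW, _⟩ := warping_construct n₁ n₂ (fun _ => True)
      exact ⟨_, W, hW, rfl⟩
    · rintro b ⟨W, hW, rfl⟩
      exact frechet_le_cost p q W hW
  · have key : dFrechet p q - max (⨆ k : Fin n₁, dist (p k.castSucc) (p k.succ))
        (⨆ l : Fin n₂, dist (q l.castSucc) (q l.succ)) ≤ FrechetDist p q := by
      unfold FrechetDist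
      apply le_csInf
      · exact ⟨_, id, id, continuousOn_id, continuousOn_id, monotoneOn_id, monotoneOn_id,
          Set.image_id _, Set.image_id _, rfl⟩
      · rintro b ⟨α, β, hαc, hβc, hαm, hβm, hαi, hβi, rfl⟩
        have := discrete_le_cost p q α β hαm hβm hαi hβi
        linarith
    linarith
end
end

section
/- ERP with gap point g satisfies the triangle inequality: for all trajectories T¹,T²,T³, ERP(T¹,T³) ≤ ERP(T¹,T²) + ERP(T²,T³), and together with symmetry, reflexivity, and identity of indiscernibles, ERP is a metric on trajectories (finite sequences in ℝ² with no point equal to g repeated appropriately). -/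
noncomputable section

/-- Edit distance with Real Penalty with gap point `g`. -/
def ERP (g : E2) : List E2 → List E2 → ℝ
  | [], l => (l.map fun x => dist x g).sum
  | l, [] => (l.map fun x => dist x g).sum
  | a :: s, b :: t =>
    min (ERP g s t + dist a b)
      (min (ERP g s (b :: t) + dist a g) (ERP g (a :: s) t + dist b g))
  termination_by l₁ l₂ => l₁.length + l₂.length
  decreasing_by all_goals simp +arith [List.length]

theorem erp_nil_left (g : E2) (l : List E2) : ERP g [] l = (l.map fun x => dist x g).sum := by
  rw [ERP]

theorem erp_nil_right (g : E2) (l : List E2) : ERP g l [] = (l.map fun x => dist x g).sum := by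
  cases l with
  | nil => rw [ERP]
  | cons a s => rw [ERP.eq_2]; simp

theorem erp_cons (g : E2) (a b : E2) (s t : List E2) :
    ERP g (a :: s) (b :: t) =
      min (ERP g s t + dist a b)
        (min (ERP g s (b :: t) + dist a g) (ERP g (a :: s) t + dist b g)) := by
  rw [ERP]

theorem sumd_nonneg (g : E2) (l : List E2) : 0 ≤ (l.map fun x => dist x g).sum := by
  apply List.sum_nonneg
  intro x hx
  simp only [List.mem_map] at hx
  obtain ⟨y, -, rfl⟩ := hx
  exact dist_nonneg

theorem erp_nonneg (g : E2) : ∀ (x y : List E2), 0 ≤ ERP g x y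
  | [], l => by rw [erp_nil_left]; exact sumd_nonneg g l
  | a :: s, [] => by rw [erp_nil_right]; exact sumd_nonneg g _
  | a :: s, b :: t => by
    rw [erp_cons]
    have h1 := erp_nonneg g s t
    have h2 := erp_nonneg g s (b :: t)
    have h3 := erp_nonneg g (a :: s) t
    have := dist_nonneg (x := a) (y := b)
    have := dist_nonneg (x := a) (y := g)
    have := dist_nonneg (x := b) (y := g)
    refine le_min (by linarith) (le_min (by linarith) (by linarith))
  termination_by x y => x.length + y.length
  decreasing_by all_goals simp +arith [List.length]

theorem erp_symm (g : E2) : ∀ (x y : List E2), ERP g x y = ERP g y x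
  | [], l => by rw [erp_nil_left, erp_nil_right]
  | a :: s, [] => by rw [erp_nil_left, erp_nil_right]
  | a :: s, b :: t => by
    rw [erp_cons, erp_cons, erp_symm g s t, erp_symm g s (b :: t), erp_symm g (a :: s) t,
      dist_comm a b, min_comm (ERP g (b :: t) s + dist a g) (ERP g t (a :: s) + dist b g)]
  termination_by x y => x.length + y.length
  decreasing_by all_goals simp +arith [List.length]

theorem erp_self (g : E2) : ∀ (x : List E2), ERP g x x = 0
  | [] => by rw [erp_nil_left]; simp
  | a :: s => by
    have h1 : ERP g (a :: s) (a :: s) ≤ ERP g s s + dist a a := by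
      rw [erp_cons]; exact min_le_left _ _
    rw [erp_self g s, dist_self] at h1
    have h2 := erp_nonneg g (a :: s) (a :: s)
    linarith

/-- `ERP g x z` is at most the cost of deleting everything. -/
theorem erp_le_sums (g : E2) : ∀ (x z : List E2),
    ERP g x z ≤ (x.map fun p => dist p g).sum + (z.map fun p => dist p g).sum
  | [], z => by rw [erp_nil_left]; simp
  | a :: s, [] => by rw [erp_nil_right]; simp [sumd_nonneg]
  | a :: s, c :: u => by
    rw [erp_cons]
    have h := erp_le_sums g s (c :: u)
    have : min (ERP g s u + dist a c)
        (min (ERP g s (c :: u) + dist a g) (ERP g (a :: s) u + dist c g))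
        ≤ ERP g s (c :: u) + dist a g :=
      le_trans (min_le_right _ _) (min_le_left _ _)
    simp only [List.map_cons, List.sum_cons] at h ⊢
    linarith
  termination_by x z => x.length + z.length
  decreasing_by all_goals simp +arith [List.length]

/-- Deleting everything from `z` costs at most deleting everything from `y` plus `ERP g y z`. -/
theorem sums_le_erp (g : E2) : ∀ (y z : List E2),
    (z.map fun p => dist p g).sum ≤ (y.map fun p => dist p g).sum + ERP g y z
  | [], z => by rw [erp_nil_left]; simp
  | b :: t, [] => by
    rw [erp_nil_right]
    simp only [List.map_nil, List.sum_nil]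
    have := sumd_nonneg g (b :: t)
    linarith
  | b :: t, c :: u => by
    rw [erp_cons]
    have h1 := sums_le_erp g t u
    have h2 := sums_le_erp g t (c :: u)
    have h3 := sums_le_erp g (b :: t) u
    have d1 := dist_triangle c b g
    have d2 := dist_comm b c
    have d3 := dist_nonneg (x := b) (y := g)
    simp only [List.map_cons, List.sum_cons] at *
    rw [← sub_le_iff_le_add', le_min_iff, le_min_iff]
    refine ⟨by linarith, by linarith, by linarith⟩
  termination_by y z => y.length + z.length
  decreasing_by all_goals simp +arith [List.length]

theorem erp_triangle (g : E2) : ∀ (x y z : List E2), ERP g x z ≤ ERP g x y + ERP g y z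
  | x, [], z => by
    rw [erp_nil_left, erp_nil_right]
    exact erp_le_sums g x z
  | [], b :: t, z => by
    rw [erp_nil_left, erp_nil_left]
    exact sums_le_erp g (b :: t) z
  | a :: s, b :: t, [] => by
    rw [erp_nil_right, erp_nil_right, erp_symm g (a :: s) (b :: t)]
    have := sums_le_erp g (b :: t) (a :: s)
    linarith
  | a :: s, b :: t, c :: u => by
    have C1 : ERP g (a :: s) (c :: u) ≤ ERP g s u + dist a c := by
      rw [erp_cons]; exact min_le_left _ _
    have C2 : ERP g (a :: s) (c :: u) ≤ ERP g s (c :: u) + dist a g := by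
      rw [erp_cons]; exact le_trans (min_le_right _ _) (min_le_left _ _)
    have C3 : ERP g (a :: s) (c :: u) ≤ ERP g (a :: s) u + dist c g := by
      rw [erp_cons]; exact le_trans (min_le_right _ _) (min_le_right _ _)
    have IH1 := erp_triangle g s t u
    have IH2 := erp_triangle g s t (c :: u)
    have IH3 := erp_triangle g (a :: s) (b :: t) u
    have IH4 := erp_triangle g (a :: s) t (c :: u)
    have IH5 := erp_triangle g (a :: s) t u
    have IH6 := erp_triangle g s (b :: t) (c :: u)
    have d1 := dist_triangle a b c
    have d2 := dist_triangle a b g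
    have d3 := dist_triangle c b g
    have d4 := dist_comm b c
    have d5 := dist_nonneg (x := b) (y := g)
    rw [erp_cons g a b s t] at IH3 ⊢
    rw [erp_cons g b c t u] at IH6 ⊢
    rcases min_cases (ERP g s t + dist a b)
        (min (ERP g s (b :: t) + dist a g) (ERP g (a :: s) t + dist b g)) with
      ⟨hA, hA'⟩ | ⟨hA, hA'⟩ <;>
    rcases min_cases (ERP g s (b :: t) + dist a g) (ERP g (a :: s) t + dist b g) with
      ⟨hA2, hA2'⟩ | ⟨hA2, hA2'⟩ <;>
    rcases min_cases (ERP g t u + dist b c)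
        (min (ERP g t (c :: u) + dist b g) (ERP g (b :: t) u + dist c g)) with
      ⟨hB, hB'⟩ | ⟨hB, hB'⟩ <;>
    rcases min_cases (ERP g t (c :: u) + dist b g) (ERP g (b :: t) u + dist c g) with
      ⟨hB2, hB2'⟩ | ⟨hB2, hB2'⟩ <;>
    linarith
  termination_by x y z => x.length + y.length + z.length
  decreasing_by all_goals simp +arith [List.length]

theorem erp_eq_zero (g : E2) : ∀ (x y : List E2), (∀ a ∈ x, a ≠ g) → (∀ b ∈ y, b ≠ g) →
    ERP g x y = 0 → x = y
  | [], [] => fun _ _ _ => rfl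
  | [], b :: t => by
    intro _ hy h
    rw [erp_nil_left] at h
    exfalso
    have hb : (0 : ℝ) < dist b g := dist_pos.2 (hy b (by simp))
    have := sumd_nonneg g t
    simp only [List.map_cons, List.sum_cons] at h
    linarith
  | a :: s, [] => by
    intro hx _ h
    rw [erp_nil_right] at h
    exfalso
    have ha : (0 : ℝ) < dist a g := dist_pos.2 (hx a (by simp))
    have := sumd_nonneg g s
    simp only [List.map_cons, List.sum_cons] at h
    linarith
  | a :: s, b :: t => by
    intro hx hy h
    rw [erp_cons] at h
    have ha : (0 : ℝ) < dist a g := dist_pos.2 (hx a (by simp))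
    have hb : (0 : ℝ) < dist b g := dist_pos.2 (hy b (by simp))
    have n1 := erp_nonneg g s t
    have n2 := erp_nonneg g s (b :: t)
    have n3 := erp_nonneg g (a :: s) t
    have hdn := dist_nonneg (x := a) (y := b)
    rcases min_cases (ERP g s t + dist a b)
        (min (ERP g s (b :: t) + dist a g) (ERP g (a :: s) t + dist b g)) with
      ⟨hA, hA'⟩ | ⟨hA, hA'⟩
    · rw [hA] at h
      have hst : ERP g s t = 0 := by linarith
      have hab : dist a b = 0 := by linarith
      have : a = b := dist_eq_zero.1 hab
      have : s = t := erp_eq_zero g s t (fun p hp => hx p (by simp [hp]))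
        (fun p hp => hy p (by simp [hp])) hst
      simp_all
    · exfalso
      rw [hA] at h
      rcases min_cases (ERP g s (b :: t) + dist a g) (ERP g (a :: s) t + dist b g) with
        ⟨hB, _⟩ | ⟨hB, _⟩ <;> rw [hB] at h <;> linarith
  termination_by x y => x.length + y.length
  decreasing_by all_goals simp +arith [List.length]

/-- `ERP` satisfies the triangle inequality and, together with nonnegativity,
symmetry, reflexivity and identity of indiscernibles (for trajectories avoiding the
gap point `g`), is a metric. -/
theorem stmt_15 (g : E2) :
    (∀ x y z : List E2, ERP g x z ≤ ERP g x y + ERP g y z) ∧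
    (∀ x y : List E2, 0 ≤ ERP g x y) ∧
    (∀ x y : List E2, ERP g x y = ERP g y x) ∧
    (∀ x : List E2, ERP g x x = 0) ∧
    (∀ x y : List E2, (∀ a ∈ x, a ≠ g) → (∀ b ∈ y, b ≠ g) → ERP g x y = 0 → x = y) := by
  exact ⟨erp_triangle g, erp_nonneg g, erp_symm g, erp_self g, erp_eq_zero g⟩
end
end
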